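/- Length leakage of naive compress-then-pad without padding: if φ is injective and two messages m₁, m₂ satisfy |φ(m₁)| ≠ |φ(m₂)|, then the cipher that outputs φ(m) XOR (key of length |φ(m)|) without padding is not perfect: there exists a ciphertext e such that P(M' = m₁ | E = e) ≠ P(M' = m₁), assuming 0 < P(m₁) and 0 < P(m₂). -/

import Mathlib

/-!
The ciphertext has the same length as the codeword, so `e = φ m₂` (obtained from `m₂` with the
all-`false` key) has positive probability, while `m₁` cannot produce it. Hence the posterior of
`m₁` given `e` is `0 ≠ P m₁`.
-/

open Finset

/-- The naive compress-then-pad cipher without padding: XOR the codeword `x`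
with a key of length exactly `|x|`. -/
def encryptNP (x : List Bool) (k : Fin x.length → Bool) : List Bool :=
  List.ofFn (fun i => Bool.xor (x.get i) (k i))

/-- The joint probability `P(M' = m, E = e)` for the unpadded cipher: the key
is uniform on `{0,1}^{|φ(m)|}`. -/
noncomputable def pJointNP {M : Type*} [Fintype M]
    (P : M → ℝ) (φ : M → List Bool) (m : M) (e : List Bool) : ℝ :=
  P m * (((univ.filter (fun k : Fin (φ m).length → Bool =>
      encryptNP (φ m) k = e)).card : ℝ) / 2 ^ (φ m).length)

@[simp]
theorem length_encryptNP (x : List Bool) (k : Fin x.length → Bool) :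
    (encryptNP x k).length = x.length :=
  List.length_ofFn

@[simp]
theorem encryptNP_false (x : List Bool) : encryptNP x (fun _ => false) = x := by
  simp [encryptNP, List.ofFn_getElem]

section pJointNP

variable {M : Type*} [Fintype M] (P : M → ℝ) (φ : M → List Bool)

theorem pJointNP_nonneg {m : M} (hm : 0 ≤ P m) (e : List Bool) : 0 ≤ pJointNP P φ m e :=
  mul_nonneg hm (by positivity)

theorem pJointNP_self_pos {m : M} (hm : 0 < P m) : 0 < pJointNP P φ m (φ m) := by
  have hkey : (fun _ => false) ∈ univ.filter fun k => encryptNP (φ m) k = φ m := by simp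
  have hcard : (0 : ℝ) < (univ.filter fun k => encryptNP (φ m) k = φ m).card := by
    exact_mod_cast card_pos.mpr ⟨_, hkey⟩
  unfold pJointNP
  positivity

theorem pJointNP_eq_zero_of_length_ne {m : M} {e : List Bool} (h : (φ m).length ≠ e.length) :
    pJointNP P φ m e = 0 := by
  have hempty : (univ.filter fun k => encryptNP (φ m) k = e) = ∅ :=
    filter_false_of_mem fun k _ hk => h (by simpa using congrArg List.length hk)
  simp [pJointNP, hempty]

end pJointNP

theorem no_padding_not_perfect_general
    {M : Type*} [Fintype M]
    (P : M → ℝ) (hP0 : ∀ m, 0 ≤ P m)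
    (φ : M → List Bool)
    (m₁ m₂ : M) (hm₁ : 0 < P m₁) (hm₂ : 0 < P m₂)
    (hlen : (φ m₁).length ≠ (φ m₂).length) :
    ∃ e : List Bool,
      0 < (∑ m, pJointNP P φ m e) ∧
      (pJointNP P φ m₁ e) / (∑ m, pJointNP P φ m e) ≠ P m₁ := by
  refine ⟨φ m₂, ?_, ?_⟩
  · calc (0 : ℝ) < pJointNP P φ m₂ (φ m₂) := pJointNP_self_pos P φ hm₂
      _ ≤ ∑ m, pJointNP P φ m (φ m₂) :=
        single_le_sum (fun m _ => pJointNP_nonneg P φ (hP0 m) (φ m₂)) (mem_univ m₂)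
  · rw [pJointNP_eq_zero_of_length_ne P φ hlen, zero_div]
    exact hm₁.ne

/-- Length leakage: if two messages of positive probability have codewords of
different lengths, then compress-then-XOR without padding is not perfect: some
ciphertext of positive probability changes the posterior of `m₁`. -/
theorem no_padding_not_perfect
    {M : Type*} [Fintype M]
    (P : M → ℝ) (hP0 : ∀ m, 0 ≤ P m) (hP1 : ∑ m, P m = 1)
    (φ : M → List Bool) (hinj : Function.Injective φ)
    (m₁ m₂ : M) (hm₁ : 0 < P m₁) (hm₂ : 0 < P m₂)
    (hlen : (φ m₁).length ≠ (φ m₂).length) :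
    ∃ e : List Bool,
      0 < (∑ m, pJointNP P φ m e) ∧
      (pJointNP P φ m₁ e) / (∑ m, pJointNP P φ m e) ≠ P m₁ :=
  no_padding_not_perfect_general P hP0 φ m₁ m₂ hm₁ hm₂ hlen
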